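/- Define $p:(0,\infty)\to\mathbb{R}$ by $p(h) = \frac{1}{2\pi}\left(1+\frac{2h\arctan(1/h)}{\pi\sqrt{1+h^2}}\right) - \frac{1}{\pi^2 h} - \frac{1}{\pi^2 h^2}\arctan(1/h)$. Then $p$ is strictly increasing on $(0,\infty)$, $\lim_{h\to 0^+} p(h) = -\infty$, and $\lim_{h\to\infty} p(h) = \frac{1}{2\pi}$; consequently $p$ has a unique positive root. -/

import Mathlib

open Real Filter

noncomputable def pFun (h : ℝ) : ℝ :=
  1 / (2 * π) * (1 + 2 * h * Real.arctan (1 / h) / (π * Real.sqrt (1 + h ^ 2)))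
    - 1 / (π ^ 2 * h) - 1 / (π ^ 2 * h ^ 2) * Real.arctan (1 / h)

noncomputable def pD (x : ℝ) : ℝ :=
  (Real.arctan (1/x) - x) / (π^2 * (Real.sqrt (1+x^2))^3) + 1/(π^2*x^2)
    + 1/(π^2*x^2*(1+x^2)) + 2*Real.arctan (1/x)/(π^2*x^3)

theorem pFun_hasDerivAt (x : ℝ) (hx : 0 < x) : HasDerivAt pFun (pD x) x := by
  have hx' := hx.ne'
  set s := Real.sqrt (1+x^2) with hsdef
  have hs0 : 0 < s := Real.sqrt_pos.2 (by positivity)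
  have hs2 : s^2 = 1+x^2 := Real.sq_sqrt (by positivity)
  have hπ : π ≠ 0 := Real.pi_ne_zero
  have hinv : HasDerivAt (fun h : ℝ => 1/h) (-(1/x^2)) x := by
    simpa [one_div] using hasDerivAt_inv hx'
  have ha : HasDerivAt (fun h : ℝ => Real.arctan (1/h)) (-(1/(1+x^2))) x := by
    have := (Real.hasDerivAt_arctan (1/x)).comp x hinv
    refine this.congr_deriv ?_; field_simp; ring
  have hsq : HasDerivAt (fun h : ℝ => 1 + h^2) (2*x) x := by
    simpa using ((hasDerivAt_pow 2 x).const_add 1)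
  have hsqrt : HasDerivAt (fun h : ℝ => Real.sqrt (1+h^2)) (x/s) x := by
    have := (Real.hasDerivAt_sqrt (by positivity : (1:ℝ)+x^2 ≠ 0)).comp x hsq
    refine this.congr_deriv ?_
    rw [← hsdef]; field_simp
  -- numerator 2*h*arctan(1/h)
  have hnum : HasDerivAt (fun h : ℝ => 2*h*Real.arctan (1/h))
      (2*Real.arctan (1/x) + 2*x*(-(1/(1+x^2)))) x := by
    have h1 : HasDerivAt (fun h : ℝ => 2*h) 2 x := by
      simpa using (hasDerivAt_id x).const_mul 2
    simpa [mul_comm] using h1.fun_mul ha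
  have hden : HasDerivAt (fun h : ℝ => π * Real.sqrt (1+h^2)) (π * (x/s)) x :=
    hsqrt.const_mul π
  have hfrac : HasDerivAt (fun h : ℝ => 2*h*Real.arctan (1/h) / (π * Real.sqrt (1+h^2)))
      (((2*Real.arctan (1/x) + 2*x*(-(1/(1+x^2)))) * (π*s) - (2*x*Real.arctan (1/x)) * (π*(x/s))) / (π*s)^2) x :=
    hnum.div hden (by positivity)
  have hA : HasDerivAt (fun h : ℝ => 1/(2*π) * (1 + 2*h*Real.arctan (1/h) / (π * Real.sqrt (1+h^2))))
      (1/(2*π) * (((2*Real.arctan (1/x) + 2*x*(-(1/(1+x^2)))) * (π*s) - (2*x*Real.arctan (1/x)) * (π*(x/s))) / (π*s)^2)) x :=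
    (hfrac.const_add 1).const_mul _
  have hB : HasDerivAt (fun h : ℝ => 1/(π^2*h)) (-(π^2)/(π^2*x)^2) x := by
    have h1 : HasDerivAt (fun h : ℝ => π^2*h) (π^2) x := by
      simpa using (hasDerivAt_id x).const_mul (π^2)
    have := (hasDerivAt_const x (1:ℝ)).fun_div h1 (by positivity)
    simpa using this
  have hC : HasDerivAt (fun h : ℝ => 1/(π^2*h^2) * Real.arctan (1/h))
      ((-(π^2*(2*x))/(π^2*x^2)^2) * Real.arctan (1/x) + 1/(π^2*x^2) * (-(1/(1+x^2)))) x := by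
    have h1 : HasDerivAt (fun h : ℝ => π^2*h^2) (π^2*(2*x)) x := by
      simpa using ((hasDerivAt_pow 2 x).const_mul (π^2))
    have h2 : HasDerivAt (fun h : ℝ => 1/(π^2*h^2)) (-(π^2*(2*x))/(π^2*x^2)^2) x := by
      have := (hasDerivAt_const x (1:ℝ)).fun_div h1 (by positivity)
      simpa using this
    exact h2.mul ha
  have htot := (hA.sub hB).sub hC
  refine htot.congr_deriv ?_
  unfold pD
  rw [← hsdef, ← hs2]
  simp only [one_div]
  set A := Real.arctan x⁻¹ with hA'
  field_simp
  linear_combination (x^3*A) * hs2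

theorem pD_pos (x : ℝ) (hx : 0 < x) : 0 < pD x := by
  set s := Real.sqrt (1+x^2) with hsdef
  have hs0 : 0 < s := Real.sqrt_pos.2 (by positivity)
  have hs2 : s^2 = 1+x^2 := Real.sq_sqrt (by positivity)
  have hxs : x < s := by
    have h2 : x^2 < s^2 := by rw [hs2]; linarith
    exact lt_of_pow_lt_pow_left₀ 2 hs0.le h2
  have hA : 0 < Real.arctan (1/x) := by
    have := Real.arctan_strictMono (show (0:ℝ) < 1/x by positivity)
    simpa using this
  set A := Real.arctan (1/x) with hA'
  have hx3 : x^3 < s^3 := by gcongr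
  have key : pD x = (A*(x^3+2*s^3) + x*(s^3 + s - x^3)) / (π^2 * x^3 * s^3) := by
    unfold pD
    rw [← hsdef, ← hA', ← hs2]
    field_simp
    ring
  rw [key]
  have hN : 0 < A*(x^3+2*s^3) + x*(s^3 + s - x^3) := by
    have h1 : 0 < A*(x^3+2*s^3) := by positivity
    have h2 : 0 < x*(s^3 + s - x^3) := by nlinarith
    linarith
  positivity

theorem pFun_continuousOn : ContinuousOn pFun (Set.Ioi (0:ℝ)) :=
  fun x hx => ((pFun_hasDerivAt x hx).continuousAt).continuousWithinAt

theorem pFun_strictMono : StrictMonoOn pFun (Set.Ioi (0:ℝ)) := by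
  apply strictMonoOn_of_deriv_pos (convex_Ioi 0) pFun_continuousOn
  intro x hx
  rw [interior_Ioi] at hx
  rw [(pFun_hasDerivAt x hx).deriv]
  exact pD_pos x hx

lemma arctan_pos' {x : ℝ} (hx : 0 < x) : 0 < Real.arctan x := by
  have := Real.arctan_strictMono (show (0:ℝ) < x from hx)
  simpa using this

lemma le_sqrt_one_add_sq (h : ℝ) : h ≤ Real.sqrt (1 + h^2) := by
  rcases le_or_gt h 0 with hh | hh
  · exact hh.trans (Real.sqrt_nonneg _)
  · have hs0 : 0 ≤ Real.sqrt (1+h^2) := Real.sqrt_nonneg _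
    have hs2 : (Real.sqrt (1+h^2))^2 = 1+h^2 := Real.sq_sqrt (by positivity)
    nlinarith [sq_nonneg (Real.sqrt (1+h^2) - h), sq_nonneg (Real.sqrt (1+h^2) + h)]

lemma one_le_sqrt_one_add_sq (h : ℝ) : 1 ≤ Real.sqrt (1 + h^2) := by
  rw [show (1:ℝ) = Real.sqrt 1 from (Real.sqrt_one).symm]
  exact Real.sqrt_le_sqrt (by nlinarith [sq_nonneg h, Real.sqrt_one])

theorem pFun_tendsto_atBot : Tendsto pFun (nhdsWithin 0 (Set.Ioi (0:ℝ))) atBot := by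
  have hT : Tendsto (fun h : ℝ => 2*h*Real.arctan (1/h) / (π * Real.sqrt (1+h^2)))
      (nhdsWithin 0 (Set.Ioi (0:ℝ))) (nhds 0) := by
    apply tendsto_of_tendsto_of_tendsto_of_le_of_le' tendsto_const_nhds
      (tendsto_id.mono_left nhdsWithin_le_nhds :
        Tendsto (fun h : ℝ => h) (nhdsWithin 0 (Set.Ioi (0:ℝ))) (nhds 0))
    · filter_upwards [self_mem_nhdsWithin] with h hh
      have hh' : (0:ℝ) < h := hh
      have h1 : 0 < Real.arctan (1/h) := arctan_pos' (by positivity)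
      have h2 : 0 < Real.sqrt (1+h^2) := Real.sqrt_pos.2 (by positivity)
      positivity
    · filter_upwards [self_mem_nhdsWithin] with h hh
      have hh' : (0:ℝ) < h := hh
      have h1 : Real.arctan (1/h) ≤ π/2 := (Real.arctan_lt_pi_div_two _).le
      have h2 : (1:ℝ) ≤ Real.sqrt (1+h^2) := one_le_sqrt_one_add_sq h
      simp only [id_eq]
      rw [div_le_iff₀ (by nlinarith [Real.pi_pos])]
      calc 2*h*Real.arctan (1/h) ≤ h*π := by nlinarith
        _ ≤ h*(π*Real.sqrt (1+h^2)) := by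
            nlinarith [mul_le_mul_of_nonneg_left h2 (show (0:ℝ) ≤ h*π by positivity)]
  have hA : Tendsto (fun h : ℝ => 1/(2*π) * (1 + 2*h*Real.arctan (1/h) / (π * Real.sqrt (1+h^2))))
      (nhdsWithin 0 (Set.Ioi (0:ℝ))) (nhds (1/(2*π))) := by
    have := ((tendsto_const_nhds (x := (1:ℝ))).add hT).const_mul (1/(2*π))
    simpa using this
  have hB : Tendsto (fun h : ℝ => 1/(π^2*h)) (nhdsWithin 0 (Set.Ioi (0:ℝ))) atTop := by
    have h1 : Tendsto (fun h : ℝ => h⁻¹) (nhdsWithin 0 (Set.Ioi (0:ℝ))) atTop :=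
      tendsto_inv_nhdsGT_zero
    have h2 := h1.const_mul_atTop (show (0:ℝ) < (π^2)⁻¹ by positivity)
    apply h2.congr
    intro h
    field_simp
  have hAB : Tendsto (fun h : ℝ => 1/(2*π) * (1 + 2*h*Real.arctan (1/h) / (π * Real.sqrt (1+h^2)))
      - 1/(π^2*h)) (nhdsWithin 0 (Set.Ioi (0:ℝ))) atBot := by
    apply Tendsto.add_atBot hA
    exact tendsto_neg_atTop_atBot.comp hB
  apply tendsto_atBot_mono' _ _ hAB
  filter_upwards [self_mem_nhdsWithin] with h hh
  have hh' : (0:ℝ) < h := hh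
  have h1 : 0 ≤ Real.arctan (1/h) := (arctan_pos' (by positivity)).le
  have h2 : 0 ≤ 1/(π^2*h^2) * Real.arctan (1/h) := by positivity
  unfold pFun
  linarith

theorem pFun_tendsto_atTop : Tendsto pFun atTop (nhds (1/(2*π))) := by
  have harc : Tendsto (fun h : ℝ => Real.arctan (1/h)) atTop (nhds 0) := by
    have h1 : Tendsto (fun h : ℝ => 1/h) atTop (nhds 0) := by
      simpa [one_div] using tendsto_inv_atTop_zero
    have := (Real.continuous_arctan.tendsto 0).comp h1
    simpa [Function.comp_def] using this
  have hT : Tendsto (fun h : ℝ => 2*h*Real.arctan (1/h) / (π * Real.sqrt (1+h^2)))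
      atTop (nhds 0) := by
    have hbound := harc.const_mul (2/π)
    rw [mul_zero] at hbound
    apply tendsto_of_tendsto_of_tendsto_of_le_of_le' tendsto_const_nhds hbound
    · filter_upwards [eventually_gt_atTop (0:ℝ)] with h hh
      have h1 : 0 < Real.arctan (1/h) := arctan_pos' (by positivity)
      have h2 : 0 < Real.sqrt (1+h^2) := Real.sqrt_pos.2 (by positivity)
      positivity
    · filter_upwards [eventually_gt_atTop (0:ℝ)] with h hh
      have h1 : 0 < Real.arctan (1/h) := arctan_pos' (by positivity)
      have h2 : 0 < Real.sqrt (1+h^2) := Real.sqrt_pos.2 (by positivity)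
      have h3 : h ≤ Real.sqrt (1+h^2) := le_sqrt_one_add_sq h
      rw [div_le_iff₀ (by nlinarith [Real.pi_pos])]
      have he : 2/π*Real.arctan (1/h)*(π*Real.sqrt (1+h^2)) = 2*Real.arctan (1/h)*Real.sqrt (1+h^2) := by
        field_simp
      rw [he]
      nlinarith [mul_le_mul_of_nonneg_left h3 (show (0:ℝ) ≤ 2*Real.arctan (1/h) by positivity)]
  have hA : Tendsto (fun h : ℝ => 1/(2*π) * (1 + 2*h*Real.arctan (1/h) / (π * Real.sqrt (1+h^2))))
      atTop (nhds (1/(2*π))) := by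
    have := ((tendsto_const_nhds (x := (1:ℝ))).add hT).const_mul (1/(2*π))
    simpa using this
  have hB : Tendsto (fun h : ℝ => 1/(π^2*h)) atTop (nhds 0) := by
    have h1 : Tendsto (fun h : ℝ => (π^2*h)) atTop atTop :=
      (tendsto_id (α := ℝ)).const_mul_atTop (by positivity)
    exact Tendsto.congr (fun h => (one_div _).symm) h1.inv_tendsto_atTop
  have hC : Tendsto (fun h : ℝ => 1/(π^2*h^2) * Real.arctan (1/h)) atTop (nhds 0) := by
    have h1 : Tendsto (fun h : ℝ => (π^2*h^2)) atTop atTop := by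
      apply Tendsto.const_mul_atTop (by positivity : (0:ℝ) < π^2)
      exact tendsto_pow_atTop (by norm_num)
    have h2 : Tendsto (fun h : ℝ => 1/(π^2*h^2)) atTop (nhds 0) := by
      exact Tendsto.congr (fun h => (one_div _).symm) h1.inv_tendsto_atTop
    have := h2.mul harc
    simpa using this
  have := (hA.sub hB).sub hC
  simp only [sub_zero] at this
  exact this

theorem pFun_strictMono_limits_unique_root :
    StrictMonoOn pFun (Set.Ioi (0:ℝ)) ∧
    Tendsto pFun (nhdsWithin 0 (Set.Ioi (0:ℝ))) atBot ∧
    Tendsto pFun atTop (nhds (1 / (2 * π))) ∧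
    ∃! h : ℝ, 0 < h ∧ pFun h = 0 := by
  refine ⟨pFun_strictMono, pFun_tendsto_atBot, pFun_tendsto_atTop, ?_⟩
  have hev1 : ∀ᶠ h in nhdsWithin 0 (Set.Ioi (0:ℝ)), pFun h < 0 :=
    pFun_tendsto_atBot.eventually (eventually_lt_atBot 0)
  have hev2 : ∀ᶠ h in nhdsWithin 0 (Set.Ioi (0:ℝ)), h ∈ Set.Ioi (0:ℝ) :=
    eventually_mem_nhdsWithin
  obtain ⟨a, ha1, ha2⟩ := (hev1.and hev2).exists
  have hev3 : ∀ᶠ h in atTop, 0 < pFun h :=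
    pFun_tendsto_atTop.eventually (eventually_gt_nhds (by positivity : (0:ℝ) < 1/(2*π)))
  obtain ⟨b, hb1, hb2⟩ := (hev3.and (eventually_gt_atTop a)).exists
  have hab : a < b := hb2
  have ha0 : (0:ℝ) < a := ha2
  have hsub : Set.Icc a b ⊆ Set.Ioi (0:ℝ) := fun x hx => lt_of_lt_of_le ha0 hx.1
  have hcont : ContinuousOn pFun (Set.Icc a b) := pFun_continuousOn.mono hsub
  obtain ⟨c, hc1, hc2⟩ := intermediate_value_Icc hab.le hcont ⟨ha1.le, hb1.le⟩
  refine ⟨c, ⟨lt_of_lt_of_le ha0 hc1.1, hc2⟩, ?_⟩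
  rintro y ⟨hy0, hy⟩
  exact pFun_strictMono.injOn (Set.mem_Ioi.2 hy0) (hsub hc1) (by rw [hy, hc2])
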